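/- arXiv:1807.04791 — 8 statements merged into one kernel-verified Lean document; each statement's English description precedes it below -/
import Mathlib

section
/- The quotient of the bi-amalgamation A ⋈^{f,g} (J, J') by the ideal 0 × J' is isomorphic to the ring f(A) + J, and the quotient by J × 0 is isomorphic to g(A) + J'. -/
/-!
Projecting the bi-amalgamation `S ⊆ B × C` onto `B` is a ring map with image `f(A) + J`. Its
kernel is `0 × J'`: if `f a + j = 0` then `f a ∈ J`, so `a ∈ f⁻¹(J) = g⁻¹(J')` and the second
coordinate `g a + j'` lies in `J'`. The first isomorphism theorem gives the first isomorphism, and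
the projection onto `C` gives the second one symmetrically.
-/

theorem RingHom.nonempty_quotient_ker_comp_subtype_equiv {R B : Type*} [CommRing R] [CommRing B]
    (φ : R →+* B) (S : Subring R) (T : Subring B) (hT : S.map φ = T) :
    Nonempty ((S ⧸ RingHom.ker (φ.comp S.subtype)) ≃+* T) := by
  have hrange : (φ.comp S.subtype).range = T := by
    rw [← RingHom.map_range, Subring.range_subtype, hT]
  exact ⟨(φ.comp S.subtype).quotientKerEquivRange.trans (RingEquiv.subringCongr hrange)⟩

namespace BiAmalgamation

variable {A B C : Type*} [CommRing A] [CommRing B] [CommRing C]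
  {f : A →+* B} {g : A →+* C} {J : Ideal B} {J' : Ideal C}

theorem map_mem_of_add_eq_zero (hcomap : J.comap f = J'.comap g) {a : A} {j : B} (hj : j ∈ J)
    (h : f a + j = 0) : g a ∈ J' := by
  have hfa : a ∈ J.comap f := by
    rw [Ideal.mem_comap, eq_neg_of_add_eq_zero_left h]
    exact J.neg_mem hj
  rwa [hcomap] at hfa

variable {S : Subring (B × C)}
  (hS : (S : Set (B × C)) = {x | ∃ a : A, ∃ j ∈ J, ∃ j' ∈ J', x = (f a + j, g a + j')})
include hS

theorem coe_ker_fst (hcomap : J.comap f = J'.comap g) :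
    (RingHom.ker ((RingHom.fst B C).comp S.subtype) : Set S) =
      {x : S | ∃ j' ∈ J', (x : B × C) = (0, j')} := by
  ext ⟨x, hx⟩
  obtain ⟨a, j, hj, j', hj', rfl⟩ : ∃ a : A, ∃ j ∈ J, ∃ j' ∈ J', x = (f a + j, g a + j') := by
    rwa [← SetLike.mem_coe, hS] at hx
  simp only [SetLike.mem_coe, RingHom.mem_ker, RingHom.comp_apply, Subring.subtype_apply,
    RingHom.coe_fst, Set.mem_ofPred_eq, Prod.ext_iff]
  constructor
  · intro h
    exact ⟨g a + j', J'.add_mem (map_mem_of_add_eq_zero hcomap hj h) hj', h, rfl⟩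
  · rintro ⟨_, _, h, _⟩
    exact h

theorem coe_ker_snd (hcomap : J.comap f = J'.comap g) :
    (RingHom.ker ((RingHom.snd B C).comp S.subtype) : Set S) =
      {x : S | ∃ j ∈ J, (x : B × C) = (j, 0)} := by
  ext ⟨x, hx⟩
  obtain ⟨a, j, hj, j', hj', rfl⟩ : ∃ a : A, ∃ j ∈ J, ∃ j' ∈ J', x = (f a + j, g a + j') := by
    rwa [← SetLike.mem_coe, hS] at hx
  simp only [SetLike.mem_coe, RingHom.mem_ker, RingHom.comp_apply, Subring.subtype_apply,
    RingHom.coe_snd, Set.mem_ofPred_eq, Prod.ext_iff]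
  constructor
  · intro h
    exact ⟨f a + j, J.add_mem (map_mem_of_add_eq_zero hcomap.symm hj' h) hj, rfl, h⟩
  · rintro ⟨_, _, _, h⟩
    exact h

theorem map_fst {T : Subring B} (hT : (T : Set B) = {b | ∃ a : A, ∃ j ∈ J, b = f a + j}) :
    S.map (RingHom.fst B C) = T := by
  refine SetLike.coe_injective ?_
  rw [Subring.coe_map, hS, hT]
  ext b
  constructor
  · rintro ⟨_, ⟨a, j, hj, j', -, rfl⟩, rfl⟩
    exact ⟨a, j, hj, rfl⟩
  · rintro ⟨a, j, hj, rfl⟩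
    exact ⟨_, ⟨a, j, hj, 0, J'.zero_mem, rfl⟩, rfl⟩

theorem map_snd {T : Subring C} (hT : (T : Set C) = {c | ∃ a : A, ∃ j' ∈ J', c = g a + j'}) :
    S.map (RingHom.snd B C) = T := by
  refine SetLike.coe_injective ?_
  rw [Subring.coe_map, hS, hT]
  ext c
  constructor
  · rintro ⟨_, ⟨a, j, -, j', hj', rfl⟩, rfl⟩
    exact ⟨a, j', hj', rfl⟩
  · rintro ⟨a, j', hj', rfl⟩
    exact ⟨_, ⟨a, 0, J.zero_mem, j', hj', rfl⟩, rfl⟩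

end BiAmalgamation

open BiAmalgamation in
/-- `(A ⋈^{f,g} (J,J')) / (0 × J') ≅ f(A)+J` and
`(A ⋈^{f,g} (J,J')) / (J × 0) ≅ g(A)+J'`. -/
theorem biAmalgamation_quotients_iso
    {A B C : Type*} [CommRing A] [CommRing B] [CommRing C]
    (f : A →+* B) (g : A →+* C) (J : Ideal B) (J' : Ideal C)
    (hcomap : J.comap f = J'.comap g) :
    ∀ S : Subring (B × C),
      (S : Set (B × C)) =
        {x | ∃ a : A, ∃ j ∈ J, ∃ j' ∈ J', x = (f a + j, g a + j')} →
      (∃ I₁ : Ideal S,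
          (I₁ : Set S) = {x : S | ∃ j' ∈ J', (x : B × C) = (0, j')} ∧
          ∀ T₁ : Subring B,
            (T₁ : Set B) = {b | ∃ a : A, ∃ j ∈ J, b = f a + j} →
            Nonempty ((S ⧸ I₁) ≃+* T₁)) ∧
      (∃ I₂ : Ideal S,
          (I₂ : Set S) = {x : S | ∃ j ∈ J, (x : B × C) = (j, 0)} ∧
          ∀ T₂ : Subring C,
            (T₂ : Set C) = {c | ∃ a : A, ∃ j' ∈ J', c = g a + j'} →
            Nonempty ((S ⧸ I₂) ≃+* T₂)) := by
  intro S hS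
  exact ⟨⟨_, coe_ker_fst hS hcomap, fun T₁ hT₁ =>
      (RingHom.fst B C).nonempty_quotient_ker_comp_subtype_equiv S T₁ (map_fst hS hT₁)⟩,
    ⟨_, coe_ker_snd hS hcomap, fun T₂ hT₂ =>
      (RingHom.snd B C).nonempty_quotient_ker_comp_subtype_equiv S T₂ (map_snd hS hT₂)⟩⟩
end

section
/- Assume J × J' contains an element (j, j') with j regular in f(A)+J and j' regular in g(A)+J'. If the bi-amalgamation A ⋈^{f,g} (J, J') is a Gaussian ring, then f⁻¹(J) = A (so J = B, J' = C, A ⋈^{f,g}(J,J') = B × C) and B and C are Gaussian. -/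
/-- The content ideal of a polynomial: the ideal generated by its coefficients. -/
noncomputable def contentIdeal {R : Type*} [CommRing R] (p : Polynomial R) : Ideal R :=
  Ideal.span (Set.range p.coeff)

/-- A commutative ring is Gaussian if `c(pq) = c(p)c(q)` for all polynomials. -/
def IsGaussianRing (R : Type*) [CommRing R] : Prop :=
  ∀ p q : Polynomial R, contentIdeal (p * q) = contentIdeal p * contentIdeal q

/-!
In a Gaussian ring, `x * y = 0` forces `x²` into the ideal `(x² + y²)`: the product of
`x + yX` and `y + xX` is `(x² + y²)X`, while `x²` lies in the product of their contents.
Applied to `x = (j, 0)` and `y = (0, j')` in the bi-amalgamation, this yields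
`s = (f a + k, g a + k')` with `s (j², j'²) = (j², 0)`. Regularity of `j'` gives `g a + k' = 0`,
so `a ∈ g⁻¹(J') = f⁻¹(J)`, and regularity of `j` gives `f a + k = 1`; hence `1 ∈ J`.
Then everything is the whole ring, and `B`, `C` are Gaussian as quotients of `B × C`.
-/

open Polynomial (C X)

theorem contentIdeal_eq_polynomial_contentIdeal {R : Type*} [CommRing R]
    (p : Polynomial R) :
    contentIdeal p = p.contentIdeal := by
  refine le_antisymm (Ideal.span_le.2 ?_) (Ideal.span_mono ?_)
  · rintro _ ⟨n, rfl⟩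
    exact p.coeff_mem_contentIdeal n
  · intro c hc
    obtain ⟨n, -, rfl⟩ := Polynomial.mem_coeffs_iff.1 hc
    exact ⟨n, rfl⟩

theorem contentIdeal_map {R T : Type*} [CommRing R] [CommRing T] (φ : R →+* T)
    (p : Polynomial R) : contentIdeal (p.map φ) = (contentIdeal p).map φ := by
  simp only [contentIdeal_eq_polynomial_contentIdeal,
    Polynomial.contentIdeal_map_eq_map_contentIdeal]

namespace IsGaussianRing

variable {R : Type*} [CommRing R]

theorem of_surjective {T : Type*} [CommRing T] (hR : IsGaussianRing R) (φ : R →+* T)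
    (hφ : Function.Surjective φ) : IsGaussianRing T := by
  intro p q
  obtain ⟨p, rfl⟩ := Polynomial.map_surjective φ hφ p
  obtain ⟨q, rfl⟩ := Polynomial.map_surjective φ hφ q
  rw [← Polynomial.map_mul, contentIdeal_map, contentIdeal_map, contentIdeal_map, hR,
    Ideal.map_mul]

theorem mul_self_mem_span_of_mul_eq_zero (hR : IsGaussianRing R) {x y : R}
    (hxy : x * y = 0) : x * x ∈ Ideal.span {x * x + y * y} := by
  have hCxy : C x * C y = 0 := by rw [← map_mul, hxy, map_zero]
  have hprod : (C x + C y * X) * (C y + C x * X) = C (x * x + y * y) * X := by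
    simp only [map_add, map_mul]
    linear_combination (1 + X ^ 2) * hCxy
  have hx_left : x ∈ contentIdeal (C x + C y * X) := Ideal.subset_span ⟨0, by simp⟩
  have hx_right : x ∈ contentIdeal (C y + C x * X) := Ideal.subset_span ⟨1, by simp⟩
  have hmem := Ideal.mul_mem_mul hx_left hx_right
  rwa [← hR, hprod, contentIdeal_eq_polynomial_contentIdeal,
    Polynomial.C_mul_X_eq_monomial, Polynomial.contentIdeal_monomial] at hmem

theorem exists_mul_eq_of_prod_subring {B C : Type*} [CommRing B] [CommRing C]
    {S : Subring (B × C)} (hS : IsGaussianRing S) {j : B} {j' : C}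
    (hj : (j, 0) ∈ S) (hj' : (0, j') ∈ S) :
    ∃ s ∈ S, s * (j * j, j' * j') = (j * j, 0) := by
  have hxy : (⟨_, hj⟩ * ⟨_, hj'⟩ : S) = 0 := Subtype.ext (by simp)
  obtain ⟨s, hs⟩ := Ideal.mem_span_singleton'.1 (hS.mul_self_mem_span_of_mul_eq_zero hxy)
  exact ⟨s, s.2, by simpa using congrArg Subtype.val hs⟩

end IsGaussianRing

section BiAmalgamation

variable {A B C : Type*} [CommRing A] [CommRing B] [CommRing C]

theorem eq_zero_of_regular_of_mul_mul_eq_zero {f : A →+* B} {J : Ideal B} {j b : B}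
    (hj : j ∈ J) (hreg : ∀ b : B, (∃ a : A, ∃ k ∈ J, b = f a + k) → j * b = 0 → b = 0)
    (hb : ∃ a : A, ∃ k ∈ J, b = f a + k) (h : j * (j * b) = 0) : b = 0 :=
  hreg b hb (hreg _ ⟨0, j * b, J.mul_mem_right b hj, by simp⟩ h)

theorem one_mem_of_regular_of_mul_mul_self_eq {f : A →+* B} {g : A →+* C}
    {J : Ideal B} {J' : Ideal C} (hcomap : J.comap f = J'.comap g) {j : B} {j' : C}
    (hj : j ∈ J) (hj' : j' ∈ J')
    (hregB : ∀ b : B, (∃ a : A, ∃ k ∈ J, b = f a + k) → j * b = 0 → b = 0)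
    (hregC : ∀ c : C, (∃ a : A, ∃ k' ∈ J', c = g a + k') → j' * c = 0 → c = 0)
    {a : A} {k : B} {k' : C} (hk : k ∈ J) (hk' : k' ∈ J')
    (hfst : (f a + k) * (j * j) = j * j) (hsnd : (g a + k') * (j' * j') = 0) :
    (1 : B) ∈ J := by
  have hg : g a + k' = 0 :=
    eq_zero_of_regular_of_mul_mul_eq_zero hj' hregC ⟨a, k', hk', rfl⟩
      (by linear_combination hsnd)
  have hfa : f a ∈ J := by
    have ha : a ∈ J'.comap g := by
      simpa [Ideal.mem_comap, eq_neg_of_add_eq_zero_left hg] using J'.neg_mem hk'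
    rwa [← hcomap] at ha
  have hf : f a + k = 1 := sub_eq_zero.1 <|
    eq_zero_of_regular_of_mul_mul_eq_zero hj hregB ⟨a - 1, k, hk, by simp; ring⟩
      (by linear_combination hfst)
  exact hf ▸ J.add_mem hfa hk

end BiAmalgamation

/-- if `J × J'` contains an element `(j, j')` with `j` regular in `f(A)+J` and
`j'` regular in `g(A)+J'`, and the bi-amalgamation is Gaussian, then `f⁻¹(J) = A`,
`J = B`, `J' = C`, the bi-amalgamation is all of `B × C`, and `B`, `C` are Gaussian. -/
theorem biAmalgamation_gaussian_regular
    {A B C : Type*} [CommRing A] [CommRing B] [CommRing C]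
    (f : A →+* B) (g : A →+* C) (J : Ideal B) (J' : Ideal C)
    (hcomap : J.comap f = J'.comap g)
    (hreg : ∃ j ∈ J, ∃ j' ∈ J',
      (∀ b : B, (∃ a : A, ∃ k ∈ J, b = f a + k) → j * b = 0 → b = 0) ∧
      (∀ c : C, (∃ a : A, ∃ k' ∈ J', c = g a + k') → j' * c = 0 → c = 0)) :
    ∀ S : Subring (B × C),
      (S : Set (B × C)) =
        {x | ∃ a : A, ∃ j ∈ J, ∃ j' ∈ J', x = (f a + j, g a + j')} →
      IsGaussianRing S →
      J.comap f = ⊤ ∧ J = ⊤ ∧ J' = ⊤ ∧ S = ⊤ ∧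
        IsGaussianRing B ∧ IsGaussianRing C := by
  obtain ⟨j, hj, j', hj', hregB, hregC⟩ := hreg
  intro S hS hG
  have mem_S (z : B × C) :
      z ∈ S ↔ ∃ a : A, ∃ k ∈ J, ∃ k' ∈ J', z = (f a + k, g a + k') :=
    Set.ext_iff.1 hS z
  obtain ⟨s, hsS, hs⟩ := hG.exists_mul_eq_of_prod_subring (j := j) (j' := j')
    ((mem_S _).2 ⟨0, j, hj, 0, J'.zero_mem, by simp⟩)
    ((mem_S _).2 ⟨0, 0, J.zero_mem, j', hj', by simp⟩)
  obtain ⟨a, k, hk, k', hk', rfl⟩ := (mem_S s).1 hsS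
  have hJ : J = ⊤ := (Ideal.eq_top_iff_one J).2 <|
    one_mem_of_regular_of_mul_mul_self_eq hcomap hj hj' hregB hregC hk hk'
      (congrArg Prod.fst hs) (congrArg Prod.snd hs)
  have hJf : J.comap f = ⊤ := by rw [hJ, Ideal.comap_top]
  have hJ' : J' = ⊤ := Ideal.comap_eq_top_iff.1 (hcomap ▸ hJf)
  have hST : S = ⊤ := eq_top_iff.2 fun z _ =>
    (mem_S z).2 ⟨0, z.1, hJ ▸ trivial, z.2, hJ' ▸ trivial, by simp⟩
  have hsurj : Function.Surjective S.subtype := fun z => ⟨⟨z, hST ▸ trivial⟩, rfl⟩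
  exact ⟨hJf, hJ, hJ', hST,
    hG.of_surjective ((RingHom.fst B C).comp S.subtype) (Prod.fst_surjective.comp hsurj),
    hG.of_surjective ((RingHom.snd B C).comp S.subtype) (Prod.snd_surjective.comp hsurj)⟩
end

section
/- Let A be a commutative ring and I a regular proper ideal of A (I contains a non-zero-divisor). Then the amalgamated duplication A ⋈ I := {(a, a+i) : a ∈ A, i ∈ I} is not a Prüfer ring. Equivalently: if A ⋈ I is Prüfer, then I = A. -/
/-!
Take a regular `r ∈ I`, and in `A ⋈ I` the elements `u = (r, r)`, which is regular, and
`v = (0, r)`. Since `v² = u v`, the regular ideal `J = (u, v)` satisfies `J² = u J`; if `J` is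
invertible it cancels, so `J = (u)` and `v = s u` for some `s = (a, a + i)`. Comparing
coordinates and cancelling `r` gives `a = 0` and `i = 1`, so `1 ∈ I`.
-/

/-- A commutative ring is Prüfer if every finitely generated regular ideal is invertible. -/
def IsPruferRing (R : Type*) [CommRing R] : Prop :=
  ∀ I : Ideal R, I.FG → (∃ r ∈ I, r ∈ nonZeroDivisors R) →
    IsUnit (I : FractionalIdeal (nonZeroDivisors R) (FractionRing R))

open scoped nonZeroDivisors

theorem Prod.mk_mem_nonZeroDivisors {M₀ N₀ : Type*} [MonoidWithZero M₀] [MonoidWithZero N₀]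
    {a : M₀} {b : N₀} (ha : a ∈ M₀⁰) (hb : b ∈ N₀⁰) : (a, b) ∈ (M₀ × N₀)⁰ :=
  ⟨fun _ hx ↦ Prod.ext (ha.1 _ congr($hx.1)) (hb.1 _ congr($hx.2)),
    fun _ hx ↦ Prod.ext (ha.2 _ congr($hx.1)) (hb.2 _ congr($hx.2))⟩

namespace Ideal

variable {R : Type*} [CommRing R] {u v : R}

theorem span_pair_mul_self_of_mul_self_eq (h : v * v = u * v) :
    span {u, v} * span {u, v} = span {u} * span {u, v} := by
  refine le_antisymm ?_ (mul_mono_left (span_mono (by simp)))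
  nth_rw 1 [span_insert]
  rw [sup_mul]
  refine sup_le le_rfl (span_singleton_mul_le_span_singleton_mul.2 fun z hz ↦ ?_)
  obtain ⟨a, b, rfl⟩ := mem_span_pair.1 hz
  refine ⟨a * v + b * v, mem_span_pair.2 ⟨0, a + b, by ring⟩, ?_⟩
  linear_combination b * h

theorem dvd_of_isUnit_span_pair {K : Type*} [CommRing K] [Algebra R K] [IsFractionRing R K]
    (h : v * v = u * v) (hJ : IsUnit (span {u, v} : FractionalIdeal R⁰ K)) : u ∣ v := by
  have hJu : (span {u, v} : FractionalIdeal R⁰ K) = span {u} := by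
    refine hJ.mul_left_cancel ?_
    rw [← FractionalIdeal.coeIdeal_mul, ← FractionalIdeal.coeIdeal_mul,
      span_pair_mul_self_of_mul_self_eq h, mul_comm]
  rw [← mem_span_singleton, ← FractionalIdeal.coeIdeal_injective' le_rfl hJu]
  exact subset_span (by simp)

end Ideal

/-- if `I` is a regular ideal of `A` and the amalgamated duplication
`A ⋈ I` is Prüfer, then `I = A`. -/
theorem duplication_prufer_imp_top
    {A : Type*} [CommRing A] (I : Ideal A)
    (hreg : ∃ r ∈ I, r ∈ nonZeroDivisors A) :
    ∀ S : Subring (A × A),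
      (S : Set (A × A)) = {x | ∃ a : A, ∃ i ∈ I, x = (a, a + i)} →
      IsPruferRing S → I = ⊤ := by
  obtain ⟨r, hrI, hr⟩ := hreg
  intro S hS hP
  have mem_S (x : A × A) : x ∈ S ↔ ∃ a : A, ∃ i ∈ I, x = (a, a + i) := Set.ext_iff.1 hS x
  let u : S := ⟨(r, r), (mem_S _).2 ⟨r, 0, I.zero_mem, by simp⟩⟩
  let v : S := ⟨(0, r), (mem_S _).2 ⟨0, r, hrI, by simp⟩⟩
  have hu : u ∈ S⁰ :=
    mem_nonZeroDivisors_of_injective (f := S.subtype) Subtype.val_injective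
      (Prod.mk_mem_nonZeroDivisors hr hr)
  have hvv : v * v = u * v := Subtype.ext (by simp [u, v])
  obtain ⟨s, hs⟩ := Ideal.dvd_of_isUnit_span_pair hvv
    (hP _ (Submodule.fg_span (Set.toFinite _)) ⟨u, Ideal.subset_span (by simp), hu⟩)
  obtain ⟨a, i, hi, hsai⟩ := (mem_S s).1 s.2
  have hsu : ((a, a + i) : A × A) * (r, r) = (0, r) := by
    rw [← hsai, mul_comm]; exact congr(Subtype.val $hs).symm
  have ha : a = 0 := (mul_cancel_right_mem_nonZeroDivisors hr).1 (by simpa using congr($hsu.1))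
  have hi1 : i = 1 :=
    (mul_cancel_right_mem_nonZeroDivisors hr).1 (by simpa [ha] using congr($hsu.2))
  exact (Ideal.eq_top_iff_one I).2 (hi1 ▸ hi)
end

section
/- In a local Gaussian commutative ring R, for any two elements a, b one has (a,b)² = (a²) or (a,b)² = (b²); moreover if ab = 0 and (a,b)² = (a²), then b² = 0. -/
/-!
Gaussianity applied to two linear polynomials gives `(a,b)(c,d) = (ac, ad+bc, bd)`; every step
below is this identity for a well-chosen second pair. With `(c,d) = (a,-b)` it gives
`(a,b)² = (a²,b²)`, so `ab = r a² + s b²`, and it remains to find `L a² = M b²` with `L` or `M` a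
unit. If `s` is not a unit, expand `a²` in `(a, b - ra)(b - ra, a)`; if `r` and `s` are units, then
`(a,b)(tb, a)` with `t = s/r` is principal, generated by `a² + tb²`. Finally, if `ab = 0` and
`b² = a²t`, then `(a,b)(b,-at) = 0` while it contains `b²`.
-/

open Ideal
open Polynomial (C X)

section

variable {R : Type*} [CommRing R]

theorem contentIdeal_quadratic (a b c : R) :
    contentIdeal (C a * X ^ 2 + C b * X + C c) = span {a, b, c} := by
  refine le_antisymm (span_le.2 ?_) (span_le.2 ?_)
  · rintro _ ⟨_ | _ | _ | n, rfl⟩ <;>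
      simp [Polynomial.coeff_X, Polynomial.coeff_X_pow] <;> exact subset_span (by simp)
  · rintro _ (rfl | rfl | rfl)
    exacts [subset_span ⟨2, by simp⟩, subset_span ⟨1, by simp⟩, subset_span ⟨0, by simp⟩]

theorem contentIdeal_linear (a b : R) : contentIdeal (C a * X + C b) = span {a, b} := by
  simpa using contentIdeal_quadratic 0 a b

theorem IsGaussianRing.span_pair_mul_span_pair (hR : IsGaussianRing R) (a b c d : R) :
    span {a, b} * span {c, d} = span {a * c, a * d + b * c, b * d} := by
  have hprod : (C a * X + C b) * (C c * X + C d) =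
      C (a * c) * X ^ 2 + C (a * d + b * c) * X + C (b * d) := by
    simp only [map_mul, map_add]
    ring
  rw [← contentIdeal_linear, ← contentIdeal_linear, ← hR, hprod, contentIdeal_quadratic]

theorem IsGaussianRing.span_pair_sq (hR : IsGaussianRing R) (x y : R) :
    span {x, y} ^ 2 = span {x ^ 2, y ^ 2} := by
  calc span {x, y} ^ 2 = span {x, y} * span {x, -y} := by rw [sq, span_pair_neg]
    _ = span {x * x, x * -y + y * x, y * -y} := hR.span_pair_mul_span_pair ..
    _ = span {x ^ 2, y ^ 2} := by
      rw [show x * -y + y * x = 0 by ring, Set.insert_comm, span_insert_zero,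
        show y * -y = -y ^ 2 by ring, span_pair_neg, sq, sq]

theorem sq_mem_span_pair_sq_left (x y : R) : x ^ 2 ∈ span {x, y} ^ 2 :=
  pow_mem_pow (subset_span (by simp)) 2

theorem sq_mem_span_pair_sq_right (x y : R) : y ^ 2 ∈ span {x, y} ^ 2 :=
  pow_mem_pow (subset_span (by simp)) 2

theorem IsGaussianRing.span_pair_sq_eq_or_of_mul_sq_eq (hR : IsGaussianRing R) {x y L M : R}
    (h : L * x ^ 2 = M * y ^ 2) (hLM : IsUnit L ∨ IsUnit M) :
    span {x, y} ^ 2 = span {x ^ 2} ∨ span {x, y} ^ 2 = span {y ^ 2} := by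
  rw [hR.span_pair_sq]
  rcases hLM with ⟨u, rfl⟩ | ⟨u, rfl⟩
  · refine .inr (Submodule.span_insert_eq_span (mem_span_singleton'.2 ⟨↑u⁻¹ * M, ?_⟩))
    rw [mul_assoc, ← h, Units.inv_mul_cancel_left]
  · refine .inl (span_pair_comm.trans
      (Submodule.span_insert_eq_span (mem_span_singleton'.2 ⟨↑u⁻¹ * L, ?_⟩)))
    rw [mul_assoc, h, Units.inv_mul_cancel_left]

theorem IsGaussianRing.sq_eq_zero_of_mul_eq_zero_of_dvd (hR : IsGaussianRing R) {a b : R}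
    (hab : a * b = 0) (hdvd : a ^ 2 ∣ b ^ 2) : b ^ 2 = 0 := by
  obtain ⟨t, ht⟩ := hdvd
  have hzero : span {a, b} * span {b, -(a * t)} = ⊥ := by
    rw [hR.span_pair_mul_span_pair, span_eq_bot]
    rintro _ (rfl | rfl | rfl)
    · exact hab
    · linear_combination ht
    · linear_combination (-t) * hab
  rw [sq, ← mem_bot, ← hzero]
  exact mul_mem_mul (subset_span (by simp)) (subset_span (by simp))

variable [IsLocalRing R]

theorem IsGaussianRing.span_pair_sq_eq_or_of_not_isUnit (hR : IsGaussianRing R) {x y r s : R}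
    (h : x * y = r * x ^ 2 + s * y ^ 2) (hs : ¬IsUnit s) :
    span {x, y} ^ 2 = span {x ^ 2} ∨ span {x, y} ^ 2 = span {y ^ 2} := by
  have hx2 : x ^ 2 ∈ span {x, y - r * x} * span {y - r * x, x} := by
    rw [span_pair_comm (x := y - r * x), show y - r * x = y + x * -r by ring,
      span_pair_add_left_mul, ← sq]
    exact sq_mem_span_pair_sq_left x y
  rw [hR.span_pair_mul_span_pair, Submodule.mem_span_triple] at hx2
  obtain ⟨p, q, w, hpqw⟩ := hx2
  simp only [smul_eq_mul] at hpqw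
  have key : (1 - q * (1 - r ^ 2)) * x ^ 2 = ((p + w) * s + q * (1 - 2 * r * s)) * y ^ 2 := by
    linear_combination -hpqw + ((p + w) - 2 * q * r) * h
  -- The two coefficients `L`, `M` of `key` satisfy `L + (1 - r²) M ≡ 1 (mod s)`.
  refine hR.span_pair_sq_eq_or_of_mul_sq_eq key
    ((IsLocalRing.isUnit_or_isUnit_of_isUnit_add (b := (1 - r ^ 2) * _) ?_).imp id
      isUnit_of_mul_isUnit_right)
  rw [show 1 - q * (1 - r ^ 2) + (1 - r ^ 2) * ((p + w) * s + q * (1 - 2 * r * s))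
      = 1 - s * ((1 - r ^ 2) * (2 * r * q - (p + w))) by ring]
  exact IsLocalRing.isUnit_one_sub_self_of_mem_nonunits _
    (mem_nonunits_iff.2 fun hu => hs (isUnit_of_mul_isUnit_left hu))

theorem IsGaussianRing.span_pair_sq_eq_or_of_mul_eq_mul (hR : IsGaussianRing R) {x y r t : R}
    (h : x * y = r * (x ^ 2 + t * y ^ 2)) (ht : IsUnit t) :
    span {x, y} ^ 2 = span {x ^ 2} ∨ span {x, y} ^ 2 = span {y ^ 2} := by
  have hspan : span {t * y, x} = span {x, y} := by
    rw [span_insert, span_singleton_mul_left_unit ht, ← span_insert, span_pair_comm]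
  have hy2 : y ^ 2 ∈ span {x, y} * span {t * y, x} := by
    rw [hspan, ← sq]
    exact sq_mem_span_pair_sq_right x y
  rw [hR.span_pair_mul_span_pair, Submodule.mem_span_triple] at hy2
  obtain ⟨p, q, w, hpqw⟩ := hy2
  simp only [smul_eq_mul] at hpqw
  have key : ((p * t + w) * r + q) * x ^ 2 = (1 - ((p * t + w) * r + q) * t) * y ^ 2 := by
    linear_combination hpqw - (p * t + w) * h
  exact hR.span_pair_sq_eq_or_of_mul_sq_eq key
    ((IsLocalRing.isUnit_or_isUnit_one_sub_self _).imp isUnit_of_mul_isUnit_left id)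

theorem IsGaussianRing.span_pair_sq_eq_or (hR : IsGaussianRing R) (x y : R) :
    span {x, y} ^ 2 = span {x ^ 2} ∨ span {x, y} ^ 2 = span {y ^ 2} := by
  have hxy : x * y ∈ span {x ^ 2, y ^ 2} := by
    rw [← hR.span_pair_sq, sq]
    exact mul_mem_mul (subset_span (by simp)) (subset_span (by simp))
  obtain ⟨r, s, h⟩ := mem_span_pair.1 hxy
  by_cases hs : IsUnit s
  · by_cases hr : IsUnit r
    · obtain ⟨u, rfl⟩ := hr
      refine hR.span_pair_sq_eq_or_of_mul_eq_mul (r := u) (t := ↑u⁻¹ * s) ?_ (u⁻¹.isUnit.mul hs)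
      linear_combination -h - s * y ^ 2 * u.mul_inv
    · rw [span_pair_comm, or_comm]
      exact hR.span_pair_sq_eq_or_of_not_isUnit (r := s) (by linear_combination -h) hr
  · exact hR.span_pair_sq_eq_or_of_not_isUnit (r := r) (by linear_combination -h) hs

end

/-- Bazzoni–Glaz: in a local Gaussian ring, `(a,b)² = (a²)` or `(b²)`;
and if `ab = 0` with `(a,b)² = (a²)`, then `b² = 0`. -/
theorem local_gaussian_two_generated
    {R : Type*} [CommRing R] [IsLocalRing R] (hR : IsGaussianRing R) (a b : R) :
    ((Ideal.span {a, b}) ^ 2 = Ideal.span {a ^ 2} ∨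
      (Ideal.span {a, b}) ^ 2 = Ideal.span {b ^ 2}) ∧
    (a * b = 0 → (Ideal.span {a, b}) ^ 2 = Ideal.span {a ^ 2} → b ^ 2 = 0) := by
  refine ⟨hR.span_pair_sq_eq_or a b, fun hab ha2 => hR.sq_eq_zero_of_mul_eq_zero_of_dvd hab ?_⟩
  rw [← mem_span_singleton, ← ha2]
  exact sq_mem_span_pair_sq_right a b
end

section
/- Let (A, m) be a local ring, and suppose A, f(A)+J, and g(A)+J' are Gaussian, J² = 0, J'² = 0, J × J' ⊆ Jac(B × C), and for all a ∈ m one has f(a)J = f(a)²J and g(a)J' = g(a)²J'. Then the bi-amalgamation A ⋈^{f,g} (J, J') is Gaussian. -/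
/-!
A local ring is Gaussian iff every pair `a, b` satisfies `(a, b)² = (a²)` or `(a, b)² = (b²)`,
and `ab = 0`, `(a, b)² = (a²)` force `b² = 0`; necessity is read off products of linear
polynomials. For sufficiency, pick a coefficient `d` of `p` or `q` whose square divides the squares
of all the others. Every coefficient is then `d l + π` with `π d = π² = 0`, so `pq = d² L L'` where
`L` has a unit coefficient, and Nakayama gives `c(L') ≤ c(L L')`.

The bi-amalgamation is `σ(A) + K` with `σ a = (f a, g a)` and `K = J × J'` a square-zero ideal,
so it is local. The first condition passes from `A` to it because, for a non-unit `a`, the relation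
`σ(a) K = σ(a)² K` puts `σ(a) K` and `σ(a²)` inside `((σ a + κ)²)`; the second is inherited from
`f(A) + J` and `g(A) + J'` through the two projections.
-/
open Polynomial hiding contentIdeal
open Ideal

section ContentIdeal

variable {R : Type*} [CommRing R]

theorem contentIdeal_eq_contentIdeal (p : R[X]) : contentIdeal p = p.contentIdeal := by
  refine le_antisymm (span_le.2 ?_) (span_le.2 ?_)
  · rintro _ ⟨n, rfl⟩
    exact p.coeff_mem_contentIdeal n
  · intro x hx
    obtain ⟨n, -, rfl⟩ := mem_coeffs_iff.1 hx
    exact subset_span ⟨n, rfl⟩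

theorem isGaussianRing_iff :
    IsGaussianRing R ↔ ∀ p q : R[X], (p * q).contentIdeal = p.contentIdeal * q.contentIdeal := by
  simp only [IsGaussianRing, contentIdeal_eq_contentIdeal]

namespace Polynomial

open Finset.HasAntidiagonal

theorem contentIdeal_le_iff {p : R[X]} {I : Ideal R} :
    p.contentIdeal ≤ I ↔ ∀ n, p.coeff n ∈ I := by
  refine ⟨fun h n ↦ h (p.coeff_mem_contentIdeal n), fun h ↦ span_le.2 fun x hx ↦ ?_⟩
  obtain ⟨n, -, rfl⟩ := mem_coeffs_iff.1 hx
  exact h n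

theorem mul_contentIdeal_le_iff {p q : R[X]} {I : Ideal R} :
    p.contentIdeal * q.contentIdeal ≤ I ↔ ∀ i j, p.coeff i * q.coeff j ∈ I := by
  refine ⟨fun h i j ↦ h (mul_mem_mul (p.coeff_mem_contentIdeal i) (q.coeff_mem_contentIdeal j)),
    fun h ↦ ?_⟩
  rw [contentIdeal_def, contentIdeal_def, span_mul_span', span_le]
  rintro _ ⟨x, hx, y, hy, rfl⟩
  obtain ⟨i, -, rfl⟩ := mem_coeffs_iff.1 hx
  obtain ⟨j, -, rfl⟩ := mem_coeffs_iff.1 hy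
  exact h i j

theorem span_singleton_mul_contentIdeal_le (r : R) (p : R[X]) :
    span {r} * p.contentIdeal ≤ (C r * p).contentIdeal := by
  rw [contentIdeal_def, span_mul_span', span_le]
  rintro _ ⟨s, hs, x, hx, rfl⟩
  rw [Set.mem_singleton_iff.1 hs]
  dsimp only
  obtain ⟨n, -, rfl⟩ := mem_coeffs_iff.1 hx
  rw [SetLike.mem_coe, ← coeff_C_mul]
  exact (C r * p).coeff_mem_contentIdeal n

/-- In the coefficient of `X^(i+j)` in `pq`, the terms `p_k q_l` with `k < i` lie in `I c(q)` and
those with `k > i` involve earlier coefficients of `q`. -/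
theorem coeff_mem_contentIdeal_mul_sup {p : R[X]} {i : ℕ} (hi : IsUnit (p.coeff i))
    {I : Ideal R} (hlow : ∀ k < i, p.coeff k ∈ I) (q : R[X]) (j : ℕ) :
    q.coeff j ∈ (p * q).contentIdeal ⊔ I * q.contentIdeal := by
  induction j using Nat.strong_induction_on with
  | _ j ih =>
    set D := (p * q).contentIdeal ⊔ I * q.contentIdeal
    have hsum : ∑ x ∈ antidiagonal (i + j), p.coeff x.1 * q.coeff x.2 ∈ D :=
      mem_sup_left (coeff_mul p q (i + j) ▸ (p * q).coeff_mem_contentIdeal (i + j))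
    have hrest : ∀ x ∈ (antidiagonal (i + j)).erase (i, j),
        p.coeff x.1 * q.coeff x.2 ∈ D := by
      rintro ⟨k, l⟩ hx
      rw [Finset.mem_erase, mem_antidiagonal, ne_eq, Prod.mk.injEq] at hx
      rcases lt_or_gt_of_ne (show k ≠ i by omega) with hk | hk
      · exact mem_sup_right (mul_mem_mul (hlow k hk) (q.coeff_mem_contentIdeal l))
      · exact D.mul_mem_left _ (ih l (by omega))
    rw [← Finset.add_sum_erase _ _ (mem_antidiagonal.2 rfl : (i, j) ∈ antidiagonal (i + j))]
      at hsum
    exact (D.unit_mul_mem_iff_mem hi).1 ((D.add_mem_iff_left (D.sum_mem hrest)).1 hsum)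

theorem contentIdeal_le_contentIdeal_mul_of_isUnit_coeff [IsLocalRing R] {p : R[X]} {i : ℕ}
    (hi : IsUnit (p.coeff i)) (q : R[X]) : q.contentIdeal ≤ (p * q).contentIdeal := by
  classical
  have hex : ∃ i, IsUnit (p.coeff i) := ⟨i, hi⟩
  refine Submodule.le_of_le_smul_of_le_jacobson_bot q.contentIdeal_FG
    (IsLocalRing.maximalIdeal_le_jacobson ⊥) (contentIdeal_le_iff.2 ?_)
  exact coeff_mem_contentIdeal_mul_sup (Nat.find_spec hex)
    (fun k hk ↦ (IsLocalRing.mem_maximalIdeal _).2 (Nat.find_min hex hk)) q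

end Polynomial

end ContentIdeal

/-- `SquareDominates a b` says `(a, b)² = (a²)`. -/
def SquareDominates {R : Type*} [CommRing R] (a b : R) : Prop :=
  a ^ 2 ∣ a * b ∧ a ^ 2 ∣ b ^ 2

namespace IsGaussianRing

variable {R : Type*} [CommRing R]

theorem of_subsingleton [Subsingleton R] : IsGaussianRing R :=
  isGaussianRing_iff.2 fun _ _ ↦ Subsingleton.elim _ _

/-- The coefficients of `(aX + b)(cX + d)` lie in `I`, hence so does `c(aX + b) c(cX + d)`. -/
theorem cross_mul_mem (hG : IsGaussianRing R) {a b c d : R} {I : Ideal R}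
    (h₂ : a * c ∈ I) (h₁ : a * d + b * c ∈ I) (h₀ : b * d ∈ I) : a * d ∈ I ∧ b * c ∈ I := by
  have hprod : (C a * X + C b) * (C c * X + C d) =
      C (a * c) * X ^ 2 + C (a * d + b * c) * X + C (b * d) := by
    simp only [map_mul, map_add]
    ring
  have hle : (C a * X + C b).contentIdeal * (C c * X + C d).contentIdeal ≤ I := by
    rw [← isGaussianRing_iff.1 hG, hprod, contentIdeal_le_iff]
    rintro (_ | _ | _ | n) <;>
      simp [-map_mul, -map_add, coeff_X, coeff_X_pow, coeff_C, *]
  rw [mul_contentIdeal_le_iff] at hle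
  simpa using And.intro (hle 1 0) (hle 0 1)

theorem sq_eq_zero_of_mul_eq_zero (hG : IsGaussianRing R) {a b : R} (hab : a * b = 0)
    (h : a ^ 2 ∣ b ^ 2) : b ^ 2 = 0 := by
  obtain ⟨β, hβ⟩ := h
  have := (hG.cross_mul_mem (I := ⊥) (a := a) (b := b) (c := b) (d := -(β * a))
    (by simp [hab]) (by rw [mem_bot]; linear_combination hβ)
    (by rw [mem_bot]; linear_combination -β * hab)).2
  rwa [mem_bot, ← sq] at this

theorem mul_mem_span_sq_sq (hG : IsGaussianRing R) (a b : R) : a * b ∈ span {a ^ 2, b ^ 2} := by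
  have := (hG.cross_mul_mem (I := span {a ^ 2, b ^ 2}) (a := a) (b := b) (c := a) (d := -b)
    (subset_span (by simp [sq])) (by rw [show a * -b + b * a = 0 by ring]; exact zero_mem _)
    (by rw [show b * -b = -b ^ 2 by ring]; exact neg_mem (subset_span (by simp)))).1
  simpa using neg_mem this

theorem mul_dvd_sq_of_sq_mem (hG : IsGaussianRing R) {a b : R}
    (h : b ^ 2 ∈ span {a ^ 2, a * b}) : a * b ∣ b ^ 2 := by
  obtain ⟨e, f, he⟩ := mem_span_pair.1 h
  have := (hG.cross_mul_mem (I := span {a * b}) (a := a) (b := b) (c := b) (d := -(e * a))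
    (mem_span_singleton_self _) (mem_span_singleton.2 ⟨f, by linear_combination -he⟩)
    (mem_span_singleton.2 ⟨-e, by ring⟩)).2
  rwa [mem_span_singleton, ← sq] at this

theorem add_sq_dvd_sq_of_mul_eq_zero (hG : IsGaussianRing R) {x y : R} (h : x * y = 0) :
    x ^ 2 + y ^ 2 ∣ x ^ 2 := by
  have := (hG.cross_mul_mem (I := span {x ^ 2 + y ^ 2}) (a := x) (b := y) (c := y) (d := x)
    (by simp [h]) (subset_span (by simp [sq])) (by simp [mul_comm y, h])).1
  rwa [mem_span_singleton, ← sq] at this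

theorem squareDominates_of_sq_mem [IsLocalRing R] (hG : IsGaussianRing R) {a b : R}
    (h : b ^ 2 ∈ span {a ^ 2, a * b}) : SquareDominates a b := by
  obtain ⟨r, s, hrs⟩ := mem_span_pair.1 (hG.mul_mem_span_sq_sq a b)
  obtain ⟨μ, hμ⟩ := hG.mul_dvd_sq_of_sq_mem h
  rcases IsLocalRing.isUnit_or_isUnit_one_sub_self (s * μ) with hu | hu
  · have hμa : b ^ 2 + (b - μ * a) ^ 2 ∣ b ^ 2 :=
      hG.add_sq_dvd_sq_of_mul_eq_zero (by linear_combination hμ)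
    rw [show b ^ 2 + (b - μ * a) ^ 2 = μ ^ 2 * a ^ 2 by linear_combination 2 * hμ] at hμa
    have ha2b2 : a ^ 2 ∣ b ^ 2 := (dvd_mul_left _ _).trans hμa
    exact ⟨(isUnit_of_mul_isUnit_right hu).dvd_mul_right.1 (hμ ▸ ha2b2), ha2b2⟩
  · have hab : a ^ 2 ∣ a * b := hu.dvd_mul_left.1 ⟨r, by linear_combination -hrs + s * hμ⟩
    exact ⟨hab, hμ ▸ dvd_mul_of_dvd_left hab μ⟩

theorem squareDominates_or [IsLocalRing R] (hG : IsGaussianRing R) (a b : R) :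
    SquareDominates a b ∨ SquareDominates b a := by
  have := (hG.cross_mul_mem (I := span {a * b, a ^ 2 + b ^ 2}) (a := a) (b := b) (c := b) (d := a)
    (subset_span (by simp)) (subset_span (by simp [sq])) (subset_span (by simp [mul_comm]))).2
  obtain ⟨c, d, hcd⟩ := mem_span_pair.1 this
  rcases IsLocalRing.isUnit_or_isUnit_one_sub_self d with hd | hd
  · refine .inr (hG.squareDominates_of_sq_mem ((unit_mul_mem_iff_mem _ hd).1 ?_))
    exact mem_span_pair.2 ⟨1 - d, -c, by linear_combination -hcd⟩
  · refine .inl (hG.squareDominates_of_sq_mem ((unit_mul_mem_iff_mem _ hd).1 ?_))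
    exact mem_span_pair.2 ⟨d, c, by linear_combination hcd⟩

end IsGaussianRing

section LocalCriterion

variable {R : Type*} [CommRing R]

theorem mul_eq_zero_of_sq_eq_zero (H1 : ∀ a b : R, SquareDominates a b ∨ SquareDominates b a)
    {x y : R} (hx : x ^ 2 = 0) (hy : y ^ 2 = 0) : x * y = 0 := by
  rcases H1 x y with ⟨h, -⟩ | ⟨h, -⟩
  · rwa [hx, zero_dvd_iff] at h
  · rwa [hy, zero_dvd_iff, mul_comm] at h

theorem exists_sub_mul_mul_eq_zero (H1 : ∀ a b : R, SquareDominates a b ∨ SquareDominates b a)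
    (H2 : ∀ a b : R, a * b = 0 → a ^ 2 ∣ b ^ 2 → b ^ 2 = 0) {d x : R} (h : d ^ 2 ∣ x ^ 2) :
    ∃ l, (x - d * l) * d = 0 ∧ (x - d * l) ^ 2 = 0 := by
  obtain ⟨l, hl⟩ : d ^ 2 ∣ x * d := by
    rcases H1 x d with ⟨h', -⟩ | ⟨h', -⟩
    · exact h.trans h'
    · exact mul_comm d x ▸ h'
  have hπd : (x - d * l) * d = 0 := by linear_combination hl
  refine ⟨l, hπd, H2 d _ (by rw [mul_comm, hπd]) ?_⟩
  obtain ⟨c, hc⟩ := h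
  exact ⟨c - l ^ 2, by linear_combination hc - 2 * l * hl⟩

theorem add_mul_add_eq_sq_mul (H1 : ∀ a b : R, SquareDominates a b ∨ SquareDominates b a)
    {d l l' π π' : R} (hπ : π * d = 0 ∧ π ^ 2 = 0) (hπ' : π' * d = 0 ∧ π' ^ 2 = 0) :
    (d * l + π) * (d * l' + π') = d ^ 2 * (l * l') := by
  linear_combination l * hπ'.1 + l' * hπ.1 + mul_eq_zero_of_sq_eq_zero H1 hπ.2 hπ'.2

theorem exists_eq_C_mul_add (H1 : ∀ a b : R, SquareDominates a b ∨ SquareDominates b a)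
    (H2 : ∀ a b : R, a * b = 0 → a ^ 2 ∣ b ^ 2 → b ^ 2 = 0) {p : R[X]} {d : R}
    (hp : ∀ n, d ^ 2 ∣ p.coeff n ^ 2) :
    ∃ L N : R[X], p = C d * L + N ∧ ∀ n, N.coeff n * d = 0 ∧ N.coeff n ^ 2 = 0 := by
  classical
  choose l hl using fun n ↦ exists_sub_mul_mul_eq_zero H1 H2 (hp n)
  let L : R[X] := ∑ n ∈ p.support, monomial n (l n)
  refine ⟨L, p - C d * L, by ring, fun n ↦ ?_⟩
  by_cases hn : n ∈ p.support
  · simpa [L, coeff_C_mul, finsetSum_coeff, coeff_monomial, hn] using hl n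
  · simp [L, coeff_C_mul, coeff_monomial, hn, notMem_support_iff.1 hn]

theorem exists_sq_dvd_sq_coeff (H : ∀ x y : R, x ^ 2 ∣ y ^ 2 ∨ y ^ 2 ∣ x ^ 2) (p q : R[X]) :
    ∃ d ∈ Set.range p.coeff ∪ Set.range q.coeff,
      ∀ n, d ^ 2 ∣ p.coeff n ^ 2 ∧ d ^ 2 ∣ q.coeff n ^ 2 := by
  obtain ⟨d, hd, hmin⟩ := (p.finite_range_coeff.union q.finite_range_coeff).exists_minimalFor
    (fun x ↦ Associates.mk (x ^ 2)) _ ⟨p.coeff 0, .inl ⟨0, rfl⟩⟩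
  have hdvd : ∀ x ∈ Set.range p.coeff ∪ Set.range q.coeff, d ^ 2 ∣ x ^ 2 := fun x hx ↦
    (H d x).elim id fun h ↦
      Associates.mk_le_mk_iff_dvd.1 (hmin hx (Associates.mk_le_mk_iff_dvd.2 h))
  exact ⟨d, hd, fun n ↦ ⟨hdvd _ (.inl ⟨n, rfl⟩), hdvd _ (.inr ⟨n, rfl⟩)⟩⟩

theorem mul_eq_C_sq_mul (H1 : ∀ a b : R, SquareDominates a b ∨ SquareDominates b a)
    {d : R} {L N L' N' : R[X]} (hN : ∀ n, N.coeff n * d = 0 ∧ N.coeff n ^ 2 = 0)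
    (hN' : ∀ n, N'.coeff n * d = 0 ∧ N'.coeff n ^ 2 = 0) :
    (C d * L + N) * (C d * L' + N') = C (d ^ 2) * (L * L') := by
  ext k
  rw [coeff_C_mul, coeff_mul, coeff_mul, Finset.mul_sum]
  refine Finset.sum_congr rfl fun x _ ↦ ?_
  rw [coeff_add, coeff_add, coeff_C_mul, coeff_C_mul]
  exact add_mul_add_eq_sq_mul H1 (hN x.1) (hN' x.2)

/-- After factoring `d²` out of `pq`, the cofactor `L` has the unit coefficient `L_{i₀}`, so
`c(L') ≤ c(LL')` over the local ring `R`. -/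
theorem coeff_mul_coeff_mem_contentIdeal [IsLocalRing R]
    (H1 : ∀ a b : R, SquareDominates a b ∨ SquareDominates b a)
    (H2 : ∀ a b : R, a * b = 0 → a ^ 2 ∣ b ^ 2 → b ^ 2 = 0) {p q : R[X]} {i₀ : ℕ}
    (hp : ∀ n, p.coeff i₀ ^ 2 ∣ p.coeff n ^ 2) (hq : ∀ n, p.coeff i₀ ^ 2 ∣ q.coeff n ^ 2)
    (i j : ℕ) : p.coeff i * q.coeff j ∈ (p * q).contentIdeal := by
  set d := p.coeff i₀
  obtain ⟨L, N, hpL, hN⟩ := exists_eq_C_mul_add H1 H2 hp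
  obtain ⟨L', N', hqL, hN'⟩ := exists_eq_C_mul_add H1 H2 hq
  have hcoeff : ∀ a b, p.coeff a * q.coeff b = d ^ 2 * (L.coeff a * L'.coeff b) := fun a b ↦ by
    rw [hpL, hqL, coeff_add, coeff_add, coeff_C_mul, coeff_C_mul]
    exact add_mul_add_eq_sq_mul H1 (hN a) (hN' b)
  by_cases hd : d ^ 2 = 0
  · rw [hcoeff, hd, zero_mul]
    exact zero_mem _
  have hunit : IsUnit (L.coeff i₀) := by
    have hd₀ : d = d * L.coeff i₀ + N.coeff i₀ := by rw [← coeff_C_mul, ← coeff_add, ← hpL]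
    have hsub : (1 - L.coeff i₀) * d ^ 2 = 0 := by linear_combination d * hd₀ + (hN i₀).1
    by_contra h
    exact hd ((IsLocalRing.isUnit_one_sub_self_of_mem_nonunits _ h).mul_right_eq_zero.1 hsub)
  rw [hcoeff, hpL, hqL, mul_eq_C_sq_mul H1 hN hN']
  exact span_singleton_mul_contentIdeal_le _ _ (mul_mem_mul (mem_span_singleton_self _)
    (mul_mem_left _ _ (contentIdeal_le_contentIdeal_mul_of_isUnit_coeff hunit L'
      (L'.coeff_mem_contentIdeal j))))

theorem isGaussianRing_of_squareDominates [IsLocalRing R]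
    (H1 : ∀ a b : R, SquareDominates a b ∨ SquareDominates b a)
    (H2 : ∀ a b : R, a * b = 0 → a ^ 2 ∣ b ^ 2 → b ^ 2 = 0) : IsGaussianRing R := by
  refine isGaussianRing_iff.2 fun p q ↦ le_antisymm (p.contentIdeal_mul_le_mul_contentIdeal q)
    (mul_contentIdeal_le_iff.2 ?_)
  obtain ⟨d, ⟨i₀, rfl⟩ | ⟨j₀, rfl⟩, hdom⟩ :=
    exists_sq_dvd_sq_coeff (fun x y ↦ (H1 x y).imp And.right And.right) p q
  · exact coeff_mul_coeff_mem_contentIdeal H1 H2 (hdom · |>.1) (hdom · |>.2)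
  · intro i j
    rw [mul_comm (p.coeff i), mul_comm p]
    exact coeff_mul_coeff_mem_contentIdeal H1 H2 (hdom · |>.2) (hdom · |>.1) j i

end LocalCriterion

theorem Ideal.mul_eq_zero_of_mul_self_eq_bot {S : Type*} [CommRing S] {K : Ideal S}
    (hK : K * K = ⊥) {x y : S} (hx : x ∈ K) (hy : y ∈ K) : x * y = 0 :=
  mem_bot.1 (hK ▸ mul_mem_mul hx hy)

section SquareZeroIdeal

variable {A S : Type*} [CommRing A] [CommRing S] {σ : A →+* S} {K : Ideal S}

theorem isUnit_map_add (hK : K * K = ⊥) {a : A} (ha : IsUnit a) {κ : S} (hκ : κ ∈ K) :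
    IsUnit (σ a + κ) :=
  IsNilpotent.isUnit_add_left_of_commute ⟨2, by rw [sq, mul_eq_zero_of_mul_self_eq_bot hK hκ hκ]⟩
    (ha.map σ) (Commute.all _ _)

theorem isLocalRing_of_mul_self_eq_bot [IsLocalRing A] [Nontrivial S] (hK : K * K = ⊥)
    (hsurj : ∀ s, ∃ a, ∃ κ ∈ K, s = σ a + κ) : IsLocalRing S :=
  .of_isUnit_or_isUnit_one_sub_self fun s ↦ by
    obtain ⟨a, κ, hκ, rfl⟩ := hsurj s
    refine (IsLocalRing.isUnit_or_isUnit_one_sub_self a).imp (isUnit_map_add hK · hκ) fun h ↦ ?_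
    rw [show 1 - (σ a + κ) = σ (1 - a) + -κ by rw [map_sub, map_one]; ring]
    exact isUnit_map_add hK h (neg_mem hκ)

theorem sq_map_add_dvd_map_mul (hK : K * K = ⊥) {a : A}
    (ha : ∀ κ ∈ K, ∃ κ' ∈ K, σ a * κ = σ a ^ 2 * κ') {u κ : S} (hu : u ∈ K) (hκ : κ ∈ K) :
    (σ a + u) ^ 2 ∣ σ a * κ := by
  obtain ⟨κ', hκ', h⟩ := ha κ hκ
  exact ⟨κ', by linear_combination h - 2 * σ a * mul_eq_zero_of_mul_self_eq_bot hK hu hκ'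
    - κ' * mul_eq_zero_of_mul_self_eq_bot hK hu hu⟩

theorem sq_map_add_dvd_map_sq (hK : K * K = ⊥) {a : A}
    (ha : ∀ κ ∈ K, ∃ κ' ∈ K, σ a * κ = σ a ^ 2 * κ') {u : S} (hu : u ∈ K) :
    (σ a + u) ^ 2 ∣ σ (a ^ 2) := by
  obtain ⟨c, hc⟩ := sq_map_add_dvd_map_mul hK ha hu hu
  exact ⟨1 - 2 * c, by
    rw [map_pow]; linear_combination -2 * hc - mul_eq_zero_of_mul_self_eq_bot hK hu hu⟩

theorem squareDominates_map_add [IsLocalRing A] (hK : K * K = ⊥)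
    (hdiv : ∀ a ∈ IsLocalRing.maximalIdeal A, ∀ κ ∈ K, ∃ κ' ∈ K, σ a * κ = σ a ^ 2 * κ')
    {a b : A} (ha : a ∈ IsLocalRing.maximalIdeal A) (hab : SquareDominates a b) {u v : S}
    (hu : u ∈ K) (hv : v ∈ K) : SquareDominates (σ a + u) (σ b + v) := by
  have hb : b ∈ IsLocalRing.maximalIdeal A := fun hb ↦
    ha ((isUnit_pow_iff two_ne_zero).1 (isUnit_of_dvd_unit hab.2 (hb.pow 2)))
  have hsq (r : A) : (σ a + u) ^ 2 ∣ σ (a ^ 2 * r) :=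
    map_mul σ _ r ▸ dvd_mul_of_dvd_left (sq_map_add_dvd_map_sq hK (hdiv a ha) hu) _
  obtain ⟨α, hα⟩ := hab.1
  obtain ⟨β, hβ⟩ := hab.2
  have hbK {κ : S} (hκ : κ ∈ K) : (σ a + u) ^ 2 ∣ σ b * κ := by
    obtain ⟨κ', -, h⟩ := hdiv b hb κ hκ
    rw [h, ← map_pow, hβ]
    exact dvd_mul_of_dvd_left (hsq β) _
  constructor
  · rw [show (σ a + u) * (σ b + v) = σ (a ^ 2 * α) + σ a * v + σ b * u by
      rw [← hα, map_mul]; linear_combination mul_eq_zero_of_mul_self_eq_bot hK hu hv]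
    exact dvd_add (dvd_add (hsq α) (sq_map_add_dvd_map_mul hK (hdiv a ha) hu hv)) (hbK hu)
  · rw [show (σ b + v) ^ 2 = σ (a ^ 2 * β) + 2 * (σ b * v) by
      rw [← hβ, map_pow]; linear_combination mul_eq_zero_of_mul_self_eq_bot hK hv hv]
    exact dvd_add (hsq β) (dvd_mul_of_dvd_right (hbK hv) 2)

theorem squareDominates_or_of_mul_self_eq_bot [IsLocalRing A] (hK : K * K = ⊥)
    (hsurj : ∀ s, ∃ a, ∃ κ ∈ K, s = σ a + κ)
    (hdiv : ∀ a ∈ IsLocalRing.maximalIdeal A, ∀ κ ∈ K, ∃ κ' ∈ K, σ a * κ = σ a ^ 2 * κ')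
    (hA : ∀ a b : A, SquareDominates a b ∨ SquareDominates b a) (x y : S) :
    SquareDominates x y ∨ SquareDominates y x := by
  have key {a b : A} {u v : S} (hu : u ∈ K) (hv : v ∈ K) (hab : SquareDominates a b) :
      SquareDominates (σ a + u) (σ b + v) := by
    by_cases ha : IsUnit a
    · have hx := (isUnit_map_add (σ := σ) hK ha hu).pow 2
      exact ⟨hx.dvd, hx.dvd⟩
    · exact squareDominates_map_add hK hdiv ((IsLocalRing.mem_maximalIdeal _).2 ha) hab hu hv
  obtain ⟨a, u, hu, rfl⟩ := hsurj x
  obtain ⟨b, v, hv, rfl⟩ := hsurj y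
  exact (hA a b).imp (key hu hv) (key hv hu)

end SquareZeroIdeal

theorem sq_eq_zero_of_isGaussianRing_of_ringHom {S T₁ T₂ : Type*} [CommRing S] [CommRing T₁]
    [CommRing T₂] {φ : S →+* T₁} {ψ : S →+* T₂} (hinj : ∀ s, φ s = 0 → ψ s = 0 → s = 0)
    (h₁ : IsGaussianRing T₁) (h₂ : IsGaussianRing T₂) {a b : S} (hab : a * b = 0)
    (h : a ^ 2 ∣ b ^ 2) : b ^ 2 = 0 := by
  refine hinj _ ?_ ?_ <;> rw [map_pow]
  · exact h₁.sq_eq_zero_of_mul_eq_zero (by rw [← map_mul, hab, map_zero])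
      (by simpa only [map_pow] using map_dvd φ h)
  · exact h₂.sq_eq_zero_of_mul_eq_zero (by rw [← map_mul, hab, map_zero])
      (by simpa only [map_pow] using map_dvd ψ h)

section BiAmalgamation

variable {A B C : Type*} [CommRing A] [CommRing B] [CommRing C] {f : A →+* B} {g : A →+* C}
  {J : Ideal B} {J' : Ideal C} {S : Subring (B × C)}

theorem mem_biAmalgamation_iff
    (hS : (S : Set (B × C)) = {x | ∃ a : A, ∃ j ∈ J, ∃ j' ∈ J', x = (f a + j, g a + j')})
    {x : B × C} : x ∈ S ↔ ∃ a : A, ∃ j ∈ J, ∃ j' ∈ J', x = (f a + j, g a + j') := by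
  rw [← SetLike.mem_coe, hS, Set.mem_ofPred_eq]

def biAmalgamationDiag
    (hS : (S : Set (B × C)) = {x | ∃ a : A, ∃ j ∈ J, ∃ j' ∈ J', x = (f a + j, g a + j')}) :
    A →+* S :=
  (f.prod g).codRestrict S fun a ↦
    (mem_biAmalgamation_iff hS).2 ⟨a, 0, J.zero_mem, 0, J'.zero_mem, by simp⟩

def biAmalgamationIdeal (J : Ideal B) (J' : Ideal C) (S : Subring (B × C)) : Ideal S :=
  (J.prod J').comap S.subtype

theorem mem_biAmalgamationIdeal {x : S} : x ∈ biAmalgamationIdeal J J' S ↔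
    (x : B × C).1 ∈ J ∧ (x : B × C).2 ∈ J' :=
  mem_prod _ _

theorem mk_mem_biAmalgamation
    (hS : (S : Set (B × C)) = {x | ∃ a : A, ∃ j ∈ J, ∃ j' ∈ J', x = (f a + j, g a + j')})
    {j : B} {j' : C} (hj : j ∈ J) (hj' : j' ∈ J') : (j, j') ∈ S :=
  (mem_biAmalgamation_iff hS).2 ⟨0, j, hj, j', hj', by simp⟩

theorem biAmalgamationIdeal_mul_self (hJ2 : J * J = ⊥) (hJ'2 : J' * J' = ⊥) :
    biAmalgamationIdeal J J' S * biAmalgamationIdeal J J' S = ⊥ := by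
  refine eq_bot_iff.2 (mul_le.2 fun x hx y hy ↦ mem_bot.2 (Subtype.ext (Prod.ext ?_ ?_)))
  · exact mul_eq_zero_of_mul_self_eq_bot hJ2 (mem_biAmalgamationIdeal.1 hx).1
      (mem_biAmalgamationIdeal.1 hy).1
  · exact mul_eq_zero_of_mul_self_eq_bot hJ'2 (mem_biAmalgamationIdeal.1 hx).2
      (mem_biAmalgamationIdeal.1 hy).2

theorem exists_eq_biAmalgamationDiag_add
    (hS : (S : Set (B × C)) = {x | ∃ a : A, ∃ j ∈ J, ∃ j' ∈ J', x = (f a + j, g a + j')})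
    (s : S) : ∃ a, ∃ κ ∈ biAmalgamationIdeal J J' S, s = biAmalgamationDiag hS a + κ := by
  obtain ⟨a, j, hj, j', hj', hs⟩ := (mem_biAmalgamation_iff hS).1 s.2
  exact ⟨a, ⟨(j, j'), mk_mem_biAmalgamation hS hj hj'⟩, mem_biAmalgamationIdeal.2 ⟨hj, hj'⟩,
    Subtype.ext hs⟩

theorem exists_biAmalgamationDiag_mul_eq
    (hS : (S : Set (B × C)) = {x | ∃ a : A, ∃ j ∈ J, ∃ j' ∈ J', x = (f a + j, g a + j')})
    {a : A} (hfa : span {f a} * J = span {f a ^ 2} * J)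
    (hga : span {g a} * J' = span {g a ^ 2} * J') {κ : S} (hκ : κ ∈ biAmalgamationIdeal J J' S) :
    ∃ κ' ∈ biAmalgamationIdeal J J' S,
      biAmalgamationDiag hS a * κ = biAmalgamationDiag hS a ^ 2 * κ' := by
  obtain ⟨hκ₁, hκ₂⟩ := mem_biAmalgamationIdeal.1 hκ
  obtain ⟨j, hj, hfj⟩ :=
    mem_span_singleton_mul.1 (hfa ▸ mul_mem_mul (mem_span_singleton_self _) hκ₁)
  obtain ⟨j', hj', hgj'⟩ :=
    mem_span_singleton_mul.1 (hga ▸ mul_mem_mul (mem_span_singleton_self _) hκ₂)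
  exact ⟨⟨(j, j'), mk_mem_biAmalgamation hS hj hj'⟩, mem_biAmalgamationIdeal.2 ⟨hj, hj'⟩,
    Subtype.ext (Prod.ext hfj.symm hgj'.symm)⟩

theorem sq_eq_zero_of_biAmalgamation
    (hS : (S : Set (B × C)) = {x | ∃ a : A, ∃ j ∈ J, ∃ j' ∈ J', x = (f a + j, g a + j')})
    {T₁ : Subring B} (hT₁ : (T₁ : Set B) = {b | ∃ a : A, ∃ j ∈ J, b = f a + j})
    (hG₁ : IsGaussianRing T₁)
    {T₂ : Subring C} (hT₂ : (T₂ : Set C) = {c | ∃ a : A, ∃ j' ∈ J', c = g a + j'})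
    (hG₂ : IsGaussianRing T₂) {x y : S} (hxy : x * y = 0) (h : x ^ 2 ∣ y ^ 2) : y ^ 2 = 0 := by
  have hfst (s : S) : (s : B × C).1 ∈ T₁ := by
    obtain ⟨a, j, hj, j', -, hs⟩ := (mem_biAmalgamation_iff hS).1 s.2
    rw [← SetLike.mem_coe, hT₁]
    exact ⟨a, j, hj, by rw [hs]⟩
  have hsnd (s : S) : (s : B × C).2 ∈ T₂ := by
    obtain ⟨a, j, -, j', hj', hs⟩ := (mem_biAmalgamation_iff hS).1 s.2
    rw [← SetLike.mem_coe, hT₂]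
    exact ⟨a, j', hj', by rw [hs]⟩
  refine sq_eq_zero_of_isGaussianRing_of_ringHom
    (φ := ((RingHom.fst B C).comp S.subtype).codRestrict T₁ hfst)
    (ψ := ((RingHom.snd B C).comp S.subtype).codRestrict T₂ hsnd) ?_ hG₁ hG₂ hxy h
  intro s h₁ h₂
  exact Subtype.ext (Prod.ext (congrArg Subtype.val h₁) (congrArg Subtype.val h₂))

end BiAmalgamation

theorem biAmalgamation_isGaussian_general
    {A B C : Type*} [CommRing A] [CommRing B] [CommRing C] [IsLocalRing A]
    (f : A →+* B) (g : A →+* C) (J : Ideal B) (J' : Ideal C)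
    (hA : IsGaussianRing A)
    (hT₁ : ∃ T₁ : Subring B, (T₁ : Set B) = {b | ∃ a : A, ∃ j ∈ J, b = f a + j} ∧
      IsGaussianRing T₁)
    (hT₂ : ∃ T₂ : Subring C, (T₂ : Set C) = {c | ∃ a : A, ∃ j' ∈ J', c = g a + j'} ∧
      IsGaussianRing T₂)
    (hJ2 : J * J = ⊥) (hJ'2 : J' * J' = ⊥)
    (hfJ : ∀ a ∈ IsLocalRing.maximalIdeal A,
      Ideal.span {f a} * J = Ideal.span {f a ^ 2} * J)
    (hgJ' : ∀ a ∈ IsLocalRing.maximalIdeal A,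
      Ideal.span {g a} * J' = Ideal.span {g a ^ 2} * J') :
    ∀ S : Subring (B × C),
      (S : Set (B × C)) =
        {x | ∃ a : A, ∃ j ∈ J, ∃ j' ∈ J', x = (f a + j, g a + j')} →
      IsGaussianRing S := by
  intro S hS
  obtain ⟨T₁, hT₁, hG₁⟩ := hT₁
  obtain ⟨T₂, hT₂, hG₂⟩ := hT₂
  cases subsingleton_or_nontrivial S
  · exact IsGaussianRing.of_subsingleton
  have hK := biAmalgamationIdeal_mul_self (S := S) hJ2 hJ'2
  have hsurj := exists_eq_biAmalgamationDiag_add hS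
  have := isLocalRing_of_mul_self_eq_bot hK hsurj
  refine isGaussianRing_of_squareDominates ?_
    fun x y ↦ sq_eq_zero_of_biAmalgamation hS hT₁ hG₁ hT₂ hG₂
  exact squareDominates_or_of_mul_self_eq_bot hK hsurj
    (fun a ha _ ↦ exists_biAmalgamationDiag_mul_eq hS (hfJ a ha) (hgJ' a ha))
    hA.squareDominates_or

/-- if `(A,m)` is local, `A`, `f(A)+J`, `g(A)+J'` are Gaussian, `J² = 0`,
`J'² = 0`, `J × J' ⊆ Jac(B × C)`, and `f(a)J = f(a)²J`, `g(a)J' = g(a)²J'` for all `a ∈ m`,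
then the bi-amalgamation is Gaussian. -/
theorem biAmalgamation_isGaussian
    {A B C : Type*} [CommRing A] [CommRing B] [CommRing C] [IsLocalRing A]
    (f : A →+* B) (g : A →+* C) (J : Ideal B) (J' : Ideal C)
    (hcomap : J.comap f = J'.comap g)
    (hA : IsGaussianRing A)
    (hT₁ : ∃ T₁ : Subring B, (T₁ : Set B) = {b | ∃ a : A, ∃ j ∈ J, b = f a + j} ∧
      IsGaussianRing T₁)
    (hT₂ : ∃ T₂ : Subring C, (T₂ : Set C) = {c | ∃ a : A, ∃ j' ∈ J', c = g a + j'} ∧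
      IsGaussianRing T₂)
    (hJ2 : J * J = ⊥) (hJ'2 : J' * J' = ⊥)
    (hJac : J.prod J' ≤ (⊥ : Ideal (B × C)).jacobson)
    (hfJ : ∀ a ∈ IsLocalRing.maximalIdeal A,
      Ideal.span {f a} * J = Ideal.span {f a ^ 2} * J)
    (hgJ' : ∀ a ∈ IsLocalRing.maximalIdeal A,
      Ideal.span {g a} * J' = Ideal.span {g a ^ 2} * J') :
    ∀ S : Subring (B × C),
      (S : Set (B × C)) =
        {x | ∃ a : A, ∃ j ∈ J, ∃ j' ∈ J', x = (f a + j, g a + j')} →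
      IsGaussianRing S :=
  biAmalgamation_isGaussian_general f g J J' hA hT₁ hT₂ hJ2 hJ'2 hfJ hgJ'
end

section
/- Let (A, m) be a local total ring of quotients (every element is a unit or a zero-divisor), f : A → B injective, J and J' nonzero proper ideals of B and C with f⁻¹(J) = g⁻¹(J'), J × J' ⊆ Jac(B × C), J² = 0, and J'² = 0. Then the bi-amalgamation A ⋈^{f,g} (J, J') is a local total ring of quotients; in particular it is a Prüfer ring. -/
/-- A total ring of quotients: every element is a unit or a zero-divisor. -/
def IsTotalRingOfQuotients (R : Type*) [CommRing R] : Prop :=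
  ∀ x : R, IsUnit x ∨ ∃ y : R, y ≠ 0 ∧ x * y = 0

theorem IsTotalRingOfQuotients.isUnit_of_mem_nonZeroDivisors {R : Type*} [CommRing R]
    (h : IsTotalRingOfQuotients R) {r : R} (hr : r ∈ nonZeroDivisors R) : IsUnit r :=
  (h r).resolve_right fun ⟨_, hy0, hry⟩ => hy0 (mem_nonZeroDivisors_iff_left.1 hr _ hry)

theorem IsTotalRingOfQuotients.isPruferRing {R : Type*} [CommRing R]
    (h : IsTotalRingOfQuotients R) : IsPruferRing R := by
  rintro I - ⟨r, hrI, hr⟩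
  rw [I.eq_top_of_isUnit_mem hrI (h.isUnit_of_mem_nonZeroDivisors hr),
    FractionalIdeal.coeIdeal_top]
  exact isUnit_one

theorem Ideal.isNilpotent_of_mem_of_mul_self_eq_bot {R : Type*} [CommRing R] {N : Ideal R}
    (hN : N * N = ⊥) {n : R} (hn : n ∈ N) : IsNilpotent n :=
  ⟨2, by rw [pow_two, ← Ideal.mem_bot, ← hN]; exact Ideal.mul_mem_mul hn hn⟩

section SquareZeroExtension

variable {A R : Type*} [CommRing A] [CommRing R] (φ : A →+* R)

theorem isUnit_map_add_of_isNilpotent {a : A} {n : R} (ha : IsUnit a) (hn : IsNilpotent n) :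
    IsUnit (φ a + n) :=
  hn.isUnit_add_left_of_commute (ha.map φ) (Commute.all _ _)

theorem IsLocalRing.of_forall_eq_map_add_isNilpotent [IsLocalRing A] [Nontrivial R]
    (hdecomp : ∀ x : R, ∃ a : A, ∃ n : R, IsNilpotent n ∧ x = φ a + n) :
    IsLocalRing R := by
  refine IsLocalRing.of_isUnit_or_isUnit_one_sub_self fun x => ?_
  obtain ⟨a, n, hn, rfl⟩ := hdecomp x
  refine (IsLocalRing.isUnit_or_isUnit_one_sub_self a).imp
    (isUnit_map_add_of_isNilpotent φ · hn) fun ha => ?_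
  have h : 1 - (φ a + n) = φ (1 - a) + -n := by rw [map_sub, map_one]; ring
  exact h ▸ isUnit_map_add_of_isNilpotent φ ha hn.neg

theorem IsTotalRingOfQuotients.of_forall_eq_map_add_mem (hφ : Function.Injective φ)
    {N : Ideal R} (hN : N * N = ⊥) (hdecomp : ∀ x : R, ∃ a : A, ∃ n ∈ N, x = φ a + n)
    (hA : IsTotalRingOfQuotients A) : IsTotalRingOfQuotients R := by
  intro x
  obtain ⟨a, n, hn, rfl⟩ := hdecomp x
  rcases hA a with ha | ⟨b, hb0, hab⟩
  · exact .inl <|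
      isUnit_map_add_of_isNilpotent φ ha (N.isNilpotent_of_mem_of_mul_self_eq_bot hN hn)
  right
  have hφab : φ a * φ b = 0 := by rw [← map_mul, hab, map_zero]
  by_cases hann : ∀ m ∈ N, φ b * m = 0
  · refine ⟨φ b, (map_ne_zero_iff φ hφ).2 hb0, ?_⟩
    calc (φ a + n) * φ b = φ a * φ b + φ b * n := by ring
      _ = 0 := by rw [hφab, hann n hn, add_zero]
  · obtain ⟨m, hm, hbm⟩ := not_forall₂.1 hann
    have hnm : n * (φ b * m) = 0 := by
      rw [← Ideal.mem_bot, ← hN]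
      exact Ideal.mul_mem_mul hn (N.mul_mem_left _ hm)
    refine ⟨φ b * m, hbm, ?_⟩
    calc (φ a + n) * (φ b * m) = φ a * φ b * m + n * (φ b * m) := by ring
      _ = 0 := by rw [hφab, hnm, zero_mul, add_zero]

end SquareZeroExtension

section BiAmalgamation

variable {A B C : Type*} [CommRing A] [CommRing B] [CommRing C]
  (f : A →+* B) (g : A →+* C) (J : Ideal B) (J' : Ideal C)

def biAmalgamation : Subring (B × C) where
  carrier := {x | ∃ a : A, ∃ j ∈ J, ∃ j' ∈ J', x = (f a + j, g a + j')}
  one_mem' := ⟨1, 0, J.zero_mem, 0, J'.zero_mem, by simp [Prod.mk_one_one]⟩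
  zero_mem' := ⟨0, 0, J.zero_mem, 0, J'.zero_mem, by simp [Prod.mk_zero_zero]⟩
  add_mem' := by
    rintro _ _ ⟨a, j, hj, j', hj', rfl⟩ ⟨b, k, hk, k', hk', rfl⟩
    exact ⟨a + b, j + k, J.add_mem hj hk, j' + k', J'.add_mem hj' hk', by
      simp only [Prod.mk_add_mk, map_add, add_add_add_comm]⟩
  neg_mem' := by
    rintro _ ⟨a, j, hj, j', hj', rfl⟩
    exact ⟨-a, -j, J.neg_mem hj, -j', J'.neg_mem hj', by
      simp only [Prod.neg_mk, map_neg, neg_add]⟩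
  mul_mem' := by
    rintro _ _ ⟨a, j, hj, j', hj', rfl⟩ ⟨b, k, hk, k', hk', rfl⟩
    refine ⟨a * b,
      f a * k + j * (f b + k), J.add_mem (J.mul_mem_left _ hk) (J.mul_mem_right _ hj),
      g a * k' + j' * (g b + k'), J'.add_mem (J'.mul_mem_left _ hk') (J'.mul_mem_right _ hj'), ?_⟩
    ext <;> simp only [Prod.mk_mul_mk, map_mul] <;> ring

namespace biAmalgamation

def diagonal : A →+* biAmalgamation f g J J' :=
  (f.prod g).codRestrict _ fun a => ⟨a, 0, J.zero_mem, 0, J'.zero_mem, by simp⟩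

def idealPart : Ideal (biAmalgamation f g J J') :=
  (J.prod J').comap (biAmalgamation f g J J').subtype

variable {f g J J'}

theorem diagonal_injective (hf : Function.Injective f) :
    Function.Injective (diagonal f g J J') :=
  fun _ _ h => hf congr($h.1.1)

theorem idealPart_mul_self (hJ2 : J * J = ⊥) (hJ'2 : J' * J' = ⊥) :
    idealPart f g J J' * idealPart f g J J' = ⊥ := by
  refine eq_bot_iff.2 (Ideal.mul_le.2 fun n hn m hm => ?_)
  rw [idealPart, Ideal.mem_comap, Ideal.mem_prod] at hn hm
  rw [Ideal.mem_bot]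
  ext
  · exact Ideal.mem_bot.1 (hJ2 ▸ Ideal.mul_mem_mul hn.1 hm.1)
  · exact Ideal.mem_bot.1 (hJ'2 ▸ Ideal.mul_mem_mul hn.2 hm.2)

theorem exists_eq_diagonal_add (x : biAmalgamation f g J J') :
    ∃ a : A, ∃ n ∈ idealPart f g J J', x = diagonal f g J J' a + n := by
  obtain ⟨a, j, hj, j', hj', hx⟩ := x.2
  exact ⟨a, ⟨(j, j'), 0, j, hj, j', hj', by simp⟩, (Ideal.mem_prod _ _).2 ⟨hj, hj'⟩,
    Subtype.ext hx⟩

theorem isNilpotent_of_mem_idealPart (hJ2 : J * J = ⊥) (hJ'2 : J' * J' = ⊥)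
    {n : biAmalgamation f g J J'} (hn : n ∈ idealPart f g J J') : IsNilpotent n :=
  Ideal.isNilpotent_of_mem_of_mul_self_eq_bot (idealPart_mul_self (f := f) (g := g) hJ2 hJ'2) hn

theorem isLocalRing [IsLocalRing A] (hf : Function.Injective f)
    (hJ2 : J * J = ⊥) (hJ'2 : J' * J' = ⊥) : IsLocalRing (biAmalgamation f g J J') := by
  have : Nontrivial (biAmalgamation f g J J') := (diagonal_injective hf).nontrivial
  refine IsLocalRing.of_forall_eq_map_add_isNilpotent (diagonal f g J J') fun x => ?_
  obtain ⟨a, n, hn, rfl⟩ := exists_eq_diagonal_add x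
  exact ⟨a, n, isNilpotent_of_mem_idealPart hJ2 hJ'2 hn, rfl⟩

theorem isTotalRingOfQuotients (hA : IsTotalRingOfQuotients A) (hf : Function.Injective f)
    (hJ2 : J * J = ⊥) (hJ'2 : J' * J' = ⊥) : IsTotalRingOfQuotients (biAmalgamation f g J J') :=
  .of_forall_eq_map_add_mem _ (diagonal_injective hf)
    (idealPart_mul_self (f := f) (g := g) hJ2 hJ'2) exists_eq_diagonal_add hA

end biAmalgamation

end BiAmalgamation

theorem biAmalgamation_totalRingOfQuotients_general
    {A B C : Type*} [CommRing A] [CommRing B] [CommRing C] [IsLocalRing A]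
    (f : A →+* B) (g : A →+* C) (J : Ideal B) (J' : Ideal C)
    (hA : IsTotalRingOfQuotients A)
    (hf : Function.Injective f)
    (hJ2 : J * J = ⊥) (hJ'2 : J' * J' = ⊥) :
    ∀ S : Subring (B × C),
      (S : Set (B × C)) =
        {x | ∃ a : A, ∃ j ∈ J, ∃ j' ∈ J', x = (f a + j, g a + j')} →
      IsLocalRing S ∧ IsTotalRingOfQuotients S ∧ IsPruferRing S := by
  intro S hS
  obtain rfl : S = biAmalgamation f g J J' := SetLike.coe_injective hS
  have htot := biAmalgamation.isTotalRingOfQuotients (g := g) hA hf hJ2 hJ'2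
  exact ⟨biAmalgamation.isLocalRing hf hJ2 hJ'2, htot, htot.isPruferRing⟩

/-- if `(A,m)` is a local total ring of quotients, `f` injective, `J, J'`
nonzero proper, `J × J' ⊆ Jac(B × C)`, `J² = 0`, `J'² = 0`, then the bi-amalgamation is a
local total ring of quotients; in particular it is Prüfer. -/
theorem biAmalgamation_totalRingOfQuotients
    {A B C : Type*} [CommRing A] [CommRing B] [CommRing C] [IsLocalRing A]
    (f : A →+* B) (g : A →+* C) (J : Ideal B) (J' : Ideal C)
    (hcomap : J.comap f = J'.comap g)
    (hA : IsTotalRingOfQuotients A)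
    (hf : Function.Injective f)
    (hJ0 : J ≠ ⊥) (hJt : J ≠ ⊤) (hJ'0 : J' ≠ ⊥) (hJ't : J' ≠ ⊤)
    (hJac : J.prod J' ≤ (⊥ : Ideal (B × C)).jacobson)
    (hJ2 : J * J = ⊥) (hJ'2 : J' * J' = ⊥) :
    ∀ S : Subring (B × C),
      (S : Set (B × C)) =
        {x | ∃ a : A, ∃ j ∈ J, ∃ j' ∈ J', x = (f a + j, g a + j')} →
      IsLocalRing S ∧ IsTotalRingOfQuotients S ∧ IsPruferRing S :=
  biAmalgamation_totalRingOfQuotients_general f g J J' hA hf hJ2 hJ'2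
end

section
/- Let (A, m) be a local ring and E a nonzero A/m-vector space. If A is not a field, then the trivial ring extension A ⋉ E is not an arithmetical ring. -/
/-!
Take `0 ≠ a ∈ m` and `0 ≠ e ∈ E`. In an arithmetical ring, `x + y` splits as
`r (x + y) + (1 - r) (x + y)` with the summands in `(x)` and `(y)` respectively. Apply this to
`x = (a, 0)`, `y = (0, e)` and write `r₀` for the first component of `r`. Since `m` kills `E`,
the ideal `(x)` lies in `A × 0`, which forces `r₀ e = 0`, i.e. `r₀ ∈ m`; the ideal `(y)` lies in
`0 × E`, which forces `(1 - r₀) a = 0`, hence `a = 0` because `1 - r₀` is a unit.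
-/

/-- A commutative ring is arithmetical if its lattice of ideals is distributive. -/
def IsArithmeticalRing (R : Type*) [CommRing R] : Prop :=
  ∀ I J K : Ideal R, I ⊓ (J ⊔ K) = (I ⊓ J) ⊔ (I ⊓ K)

theorem IsArithmeticalRing.exists_mul_add_mem_span {R : Type*} [CommRing R]
    (h : IsArithmeticalRing R) (x y : R) :
    ∃ r : R, r * (x + y) ∈ Ideal.span {x} ∧ (1 - r) * (x + y) ∈ Ideal.span {y} := by
  have hmem : x + y ∈ Ideal.span {x + y} ⊓ (Ideal.span {x} ⊔ Ideal.span {y}) :=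
    ⟨Ideal.mem_span_singleton_self _,
      add_mem (Ideal.mem_sup_left (Ideal.mem_span_singleton_self x))
        (Ideal.mem_sup_right (Ideal.mem_span_singleton_self y))⟩
  rw [h] at hmem
  obtain ⟨u, ⟨huz, hux⟩, v, ⟨-, hvy⟩, huv⟩ := Submodule.mem_sup.1 hmem
  obtain ⟨r, rfl⟩ := Ideal.mem_span_singleton'.1 huz
  have hv : (1 - r) * (x + y) = v := by linear_combination -huv
  exact ⟨r, hux, hv ▸ hvy⟩

theorem IsLocalRing.mem_maximalIdeal_of_smul_eq_zero {A M : Type*} [CommRing A] [IsLocalRing A]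
    [AddCommGroup M] [Module A M] {r : A} {e : M} (he : e ≠ 0) (hr : r • e = 0) :
    r ∈ IsLocalRing.maximalIdeal A := fun hu => he ((hu.smul_eq_zero).1 hr)

theorem IsLocalRing.exists_mem_maximalIdeal_ne_zero {A : Type*} [CommRing A] [IsLocalRing A]
    (hA : ¬ IsField A) : ∃ a ∈ IsLocalRing.maximalIdeal A, a ≠ 0 :=
  Submodule.exists_mem_ne_zero_of_ne_bot fun h =>
    hA ((IsLocalRing.isField_iff_maximalIdeal_eq).2 h)

namespace TrivSqZeroExt

variable {R M : Type*} [CommRing R] [AddCommGroup M] [Module R M] [Module Rᵐᵒᵖ M]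
  [IsCentralScalar R M]

theorem fst_eq_zero_of_mem_span_inr {e : M} {x : TrivSqZeroExt R M}
    (hx : x ∈ Ideal.span {inr e}) : x.fst = 0 := by
  obtain ⟨c, rfl⟩ := Ideal.mem_span_singleton'.1 hx
  simp

theorem snd_eq_zero_of_mem_span_inl {a : R} (ha : ∀ e : M, a • e = 0) {x : TrivSqZeroExt R M}
    (hx : x ∈ Ideal.span {inl a}) : x.snd = 0 := by
  obtain ⟨c, rfl⟩ := Ideal.mem_span_singleton'.1 hx
  simp [op_smul_eq_smul, ha]

end TrivSqZeroExt

/-- if `(A, m)` is local but not a field and `E` a nonzero `A/m`-vector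
space, then `A ⋉ E` is not arithmetical. -/
theorem trivSqZeroExt_not_arithmetical
    (A E : Type*) [CommRing A] [IsLocalRing A]
    [AddCommGroup E] [Module A E] [Module Aᵐᵒᵖ E] [IsCentralScalar A E]
    [Nontrivial E]
    (hkill : ∀ a ∈ IsLocalRing.maximalIdeal A, ∀ e : E, a • e = 0)
    (hA : ¬ IsField A) :
    ¬ IsArithmeticalRing (TrivSqZeroExt A E) := by
  intro h
  obtain ⟨a, ham, ha0⟩ := IsLocalRing.exists_mem_maximalIdeal_ne_zero hA
  obtain ⟨e, he0⟩ := exists_ne (0 : E)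
  obtain ⟨r, hrx, hry⟩ := h.exists_mul_add_mem_span (.inl a) (.inr e)
  have hr : r.fst ∈ IsLocalRing.maximalIdeal A := by
    refine IsLocalRing.mem_maximalIdeal_of_smul_eq_zero he0 ?_
    simpa [op_smul_eq_smul, hkill a ham] using TrivSqZeroExt.snd_eq_zero_of_mem_span_inl (hkill a ham) hrx
  have h1r : (1 - r.fst) * a = 0 := by simpa using TrivSqZeroExt.fst_eq_zero_of_mem_span_inr hry
  exact ha0 ((IsLocalRing.isUnit_one_sub_self_of_mem_nonunits _ hr).mul_right_eq_zero.1 h1r)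
end

section
/- Let (A₁, m₁) be a local ring and set A := A₁ ⋉ (A₁/m₁) (trivial extension). Then A is a local total ring of quotients: every element of A is either a unit or a zero-divisor. -/
/-!
An element of `A₁ ⋉ E` is a unit exactly when its `A₁`-component is, so locality passes from
`A₁` to the extension. A nonunit `x` has `x.fst ∈ m₁`, which annihilates `E = A₁/m₁`; hence
`x * (0, 1) = (0, x.fst • 1) = 0` with `(0, 1) ≠ 0`.
-/

namespace TrivSqZeroExt

open IsLocalRing

theorem inr_eq_zero_iff {R M : Type*} [Zero R] [Zero M] {m : M} :
    (inr m : TrivSqZeroExt R M) = 0 ↔ m = 0 := by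
  rw [← inr_zero, inr_injective.eq_iff]

variable {R M : Type*} [CommRing R] [AddCommGroup M] [Module R M] [Module Rᵐᵒᵖ M]

theorem mul_inr_eq_inr_smul (x : TrivSqZeroExt R M) (m : M) : x * inr m = inr (x.fst • m) := by
  ext <;> simp [snd_mul]

variable [IsLocalRing R] [SMulCommClass R Rᵐᵒᵖ M]

theorem isLocalRing : IsLocalRing (TrivSqZeroExt R M) :=
  .of_isUnit_or_isUnit_of_isUnit_add fun a b hab ↦
    (isUnit_or_isUnit_of_isUnit_add (a := a.fst) (b := b.fst) (isUnit_iff_isUnit_fst.mp hab)).imp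
      isUnit_iff_isUnit_fst.mpr isUnit_iff_isUnit_fst.mpr

theorem isUnit_or_mul_inr_eq_zero {m : M} (hm : ∀ r ∈ maximalIdeal R, r • m = 0)
    (x : TrivSqZeroExt R M) : IsUnit x ∨ x * inr m = 0 := by
  rw [isUnit_iff_isUnit_fst, mul_inr_eq_inr_smul, inr_eq_zero_iff]
  exact (em _).imp_right fun hx ↦ hm _ hx

end TrivSqZeroExt

theorem Ideal.Quotient.smul_eq_zero_of_mem {R : Type*} [CommRing R] {I : Ideal R} {r : R}
    (hr : r ∈ I) (q : R ⧸ I) : r • q = 0 := by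
  rw [Algebra.smul_def, Ideal.Quotient.algebraMap_eq, Ideal.Quotient.eq_zero_iff_mem.mpr hr,
    zero_mul]

/-- if `(A₁, m₁)` is local, then `A₁ ⋉ (A₁/m₁)` is a local total ring of
quotients: every element is a unit or a zero-divisor. -/
theorem trivSqZeroExt_residue_totalRingOfQuotients
    (A₁ : Type*) [CommRing A₁] [IsLocalRing A₁] :
    IsLocalRing (TrivSqZeroExt A₁ (A₁ ⧸ IsLocalRing.maximalIdeal A₁)) ∧
      ∀ x : TrivSqZeroExt A₁ (A₁ ⧸ IsLocalRing.maximalIdeal A₁),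
        IsUnit x ∨ ∃ y : TrivSqZeroExt A₁ (A₁ ⧸ IsLocalRing.maximalIdeal A₁),
          y ≠ 0 ∧ x * y = 0 := by
  refine ⟨TrivSqZeroExt.isLocalRing, fun x ↦ ?_⟩
  have inr_one_ne_zero :
      (TrivSqZeroExt.inr 1 : TrivSqZeroExt A₁ (A₁ ⧸ IsLocalRing.maximalIdeal A₁)) ≠ 0 :=
    TrivSqZeroExt.inr_eq_zero_iff.not.mpr one_ne_zero
  exact (TrivSqZeroExt.isUnit_or_mul_inr_eq_zero
    (fun r hr ↦ Ideal.Quotient.smul_eq_zero_of_mem hr 1) x).imp_right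
    fun hx ↦ ⟨_, inr_one_ne_zero, hx⟩
end
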